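/- Assume f is L-Lipschitz and β-smooth (no convexity is assumed) and P is a gossip matrix with spectral bound λ ∈ [0, 1). Then for every z ∈ 𝒵, |f(w̄^{T+1}; z) − f(v̄^{T+1}; z)| ≤ 2L² ∑_{t=1}^T ( 2βη_t ∑_{q=1}^{t−1} η_q λ^{t−q−1} + (η_t/m) 𝟙[j_t(r)=k] ) ∏_{s=t+1}^{T} (1 + βη_s), where the empty product (t = T) equals 1. -/

import Mathlib

/-!
The difference `δ t = w t - v t` of the two runs follows `δ (t+1) = P δ t - η t • g t`, with `g t`
the differences of the stochastic gradients. Because `P` is doubly stochastic, the average of `δ`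
moves only by `η t` times the average of `g t`, while the deviation from the average is contracted
by `lam` and kicked by at most `4 L √m η t` in ℓ²; a discrete Grönwall argument bounds it by
`4 L √m ∑_q η q lam ^ (t - q - 1)`. Smoothness bounds the average of `g t` by `β` times the average
and the deviation of `δ t`, plus `2 L / m` when the differing sample is drawn, so a second Grönwall
argument bounds the average of `δ (T+1)`, and `f` is `L`-Lipschitz.
-/

open Finset

theorem Finset.sum_le_sum_add_of_forall_ne_le {κ M : Type*} [Fintype κ] [DecidableEq κ]
    [AddCommMonoid M] [PartialOrder M] [IsOrderedAddMonoid M] {f g : κ → M} {r : κ} {c : M}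
    (hne : ∀ i, i ≠ r → f i ≤ g i) (hr : f r ≤ g r + c) : ∑ i, f i ≤ ∑ i, g i + c := by
  rw [← add_sum_erase _ f (mem_univ r), ← add_sum_erase _ g (mem_univ r), add_right_comm]
  gcongr with i hi
  exact hne i (ne_of_mem_erase hi)

theorem discrete_gronwall_prod_Icc {R : Type*} [CommSemiring R] [PartialOrder R] [IsOrderedRing R]
    {u b c : ℕ → R} {T : ℕ} (hu₁ : u 1 ≤ 0) (hc : ∀ t ∈ Icc 1 T, 0 ≤ c t)
    (hu : ∀ t ∈ Icc 1 T, u (t + 1) ≤ c t * u t + b t) :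
    u (T + 1) ≤ ∑ t ∈ Icc 1 T, b t * ∏ s ∈ Icc (t + 1) T, c s := by
  induction T with
  | zero => simpa using hu₁
  | succ T ih =>
    have hT : T + 1 ∈ Icc 1 (T + 1) := by simp
    have heq : c (T + 1) * ∑ t ∈ Icc 1 T, b t * ∏ s ∈ Icc (t + 1) T, c s + b (T + 1) =
        ∑ t ∈ Icc 1 (T + 1), b t * ∏ s ∈ Icc (t + 1) (T + 1), c s := by
      rw [sum_Icc_succ_top (by omega), mul_sum, Icc_eq_empty_of_lt (Nat.lt_succ_self _),
        prod_empty, mul_one]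
      refine congr_arg (· + b (T + 1)) (sum_congr rfl fun t ht => ?_)
      rw [prod_Icc_succ_top (by have := (mem_Icc.mp ht).2; omega)]
      ring
    calc u (T + 1 + 1) ≤ c (T + 1) * u (T + 1) + b (T + 1) := hu _ hT
      _ ≤ c (T + 1) * ∑ t ∈ Icc 1 T, b t * ∏ s ∈ Icc (t + 1) T, c s + b (T + 1) := by
          have := hc _ hT
          gcongr
          exact ih (fun t ht => hc t (Icc_subset_Icc_right T.le_succ ht))
            (fun t ht => hu t (Icc_subset_Icc_right T.le_succ ht))
      _ = _ := heq

noncomputable section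

namespace DSGD

variable {ι H : Type*} [Fintype ι] [NormedAddCommGroup H]

theorem sum_norm_grad_sub_le [DecidableEq ι] {Z κ : Type*} [DecidableEq κ]
    {f' : Z → H → H} {L β : ℝ} (hβ : 0 ≤ β) (hbound : ∀ z x, ‖f' z x‖ ≤ L)
    (hsmooth : ∀ z x y, ‖f' z x - f' z y‖ ≤ β * ‖x - y‖) {S S' : ι → κ → Z} {r : ι} {k : κ}
    (hSS' : ∀ r' k', (r', k') ≠ (r, k) → S' r' k' = S r' k') (jt : ι → κ) (x y : ι → H) :
    ∑ i, ‖f' (S i (jt i)) (x i) - f' (S' i (jt i)) (y i)‖ ≤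
      β * ∑ i, ‖x i - y i‖ + 2 * L * (if jt r = k then 1 else 0) := by
  have hsame : ∀ i, (i, jt i) ≠ (r, k) →
      ‖f' (S i (jt i)) (x i) - f' (S' i (jt i)) (y i)‖ ≤ β * ‖x i - y i‖ := fun i hi => by
    rw [hSS' i (jt i) hi]
    exact hsmooth _ _ _
  rw [mul_sum]
  refine sum_le_sum_add_of_forall_ne_le (r := r) (fun i hi => hsame i (by simp [hi])) ?_
  split_ifs with hk
  · have := mul_nonneg hβ (norm_nonneg (x r - y r))
    linarith [norm_sub_le (f' (S r (jt r)) (x r)) (f' (S' r (jt r)) (y r)),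
      hbound (S r (jt r)) (x r), hbound (S' r (jt r)) (y r)]
  · simpa using hsame r (by simp [hk])

def l2norm (x : ι → H) : ℝ := √(∑ i, ‖x i‖ ^ 2)

theorem l2norm_eq_norm_toLp (x : ι → H) : l2norm x = ‖WithLp.toLp 2 x‖ :=
  (PiLp.norm_eq_of_L2 _).symm

theorem l2norm_sub_le (x y : ι → H) : l2norm (x - y) ≤ l2norm x + l2norm y := by
  simpa only [l2norm_eq_norm_toLp, WithLp.toLp_sub] using norm_sub_le _ _

theorem l2norm_le_sqrt_card_mul {x : ι → H} {C : ℝ} (hC : 0 ≤ C) (hx : ∀ i, ‖x i‖ ≤ C) :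
    l2norm x ≤ √(Fintype.card ι) * C := by
  calc l2norm x ≤ √(∑ _i : ι, C ^ 2) :=
        Real.sqrt_le_sqrt <| sum_le_sum fun i _ => pow_le_pow_left₀ (norm_nonneg _) (hx i) 2
    _ = √(Fintype.card ι) * C := by
        rw [sum_const, card_univ, nsmul_eq_mul, Real.sqrt_mul (Nat.cast_nonneg _),
          Real.sqrt_sq hC]

theorem sum_norm_le_sqrt_card_mul_l2norm (x : ι → H) :
    ∑ i, ‖x i‖ ≤ √(Fintype.card ι) * l2norm x := by
  simpa [l2norm] using Real.sum_mul_le_sqrt_mul_sqrt univ (fun _ => (1 : ℝ)) (fun i => ‖x i‖)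

variable [NormedSpace ℝ H]

def avg (x : ι → H) : H := (Fintype.card ι : ℝ)⁻¹ • ∑ i, x i

def deviation (x : ι → H) : ι → H := fun i => x i - avg x

def gossip (P : ι → ι → ℝ) (x : ι → H) (i : ι) : H := ∑ l, P i l • x l

theorem l2norm_smul (c : ℝ) (x : ι → H) : l2norm (c • x) = |c| * l2norm x := by
  simp only [l2norm_eq_norm_toLp, WithLp.toLp_smul, norm_smul, Real.norm_eq_abs]

theorem avg_sub (x y : ι → H) : avg (x - y) = avg x - avg y := by
  simp only [avg, Pi.sub_apply, sum_sub_distrib, smul_sub]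

theorem avg_smul (c : ℝ) (x : ι → H) : avg (c • x) = c • avg x := by
  simp only [avg, Pi.smul_apply, ← smul_sum, smul_comm c]

theorem norm_avg_le (x : ι → H) : ‖avg x‖ ≤ (Fintype.card ι : ℝ)⁻¹ * ∑ i, ‖x i‖ := by
  rw [avg, norm_smul, Real.norm_of_nonneg (by positivity)]
  gcongr
  exact norm_sum_le _ _

theorem norm_avg_le_of_norm_le {x : ι → H} {C : ℝ} (hC : 0 ≤ C) (hx : ∀ i, ‖x i‖ ≤ C) :
    ‖avg x‖ ≤ C := by
  refine (norm_avg_le x).trans ?_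
  rcases isEmpty_or_nonempty ι with hι | hι
  · simpa using hC
  calc (Fintype.card ι : ℝ)⁻¹ * ∑ i, ‖x i‖ ≤ (Fintype.card ι : ℝ)⁻¹ * ∑ _i : ι, C := by
        gcongr with i; exact hx i
    _ = C := by
        rw [sum_const, card_univ, nsmul_eq_mul, inv_mul_cancel_left₀ (by positivity)]

theorem sum_deviation [Nonempty ι] (x : ι → H) : ∑ i, deviation x i = 0 := by
  simp only [deviation]
  rw [sum_sub_distrib, sum_const, card_univ, ← Nat.cast_smul_eq_nsmul ℝ, avg, smul_smul,
    mul_inv_cancel₀ (by positivity), one_smul, sub_self]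

theorem sum_norm_le_card_mul_norm_avg_add [Nonempty ι] (x : ι → H) :
    ∑ i, ‖x i‖ ≤ Fintype.card ι * ‖avg x‖ + √(Fintype.card ι) * l2norm (deviation x) :=
  calc ∑ i, ‖x i‖ ≤ ∑ i, (‖avg x‖ + ‖x i - avg x‖) :=
        sum_le_sum fun i _ => norm_le_norm_add_norm_sub' (x i) (avg x)
    _ ≤ _ := by
        rw [sum_add_distrib, sum_const, card_univ, nsmul_eq_mul]
        gcongr
        exact sum_norm_le_sqrt_card_mul_l2norm _

theorem norm_deviation_le {x : ι → H} {C : ℝ} (hC : 0 ≤ C) (hx : ∀ i, ‖x i‖ ≤ C) (i : ι) :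
    ‖deviation x i‖ ≤ 2 * C := by
  calc ‖x i - avg x‖ ≤ ‖x i‖ + ‖avg x‖ := norm_sub_le _ _
    _ ≤ C + C := add_le_add (hx i) (norm_avg_le_of_norm_le hC hx)
    _ = 2 * C := (two_mul C).symm

section Gossip

variable {P : ι → ι → ℝ}

theorem gossip_deviation (hrow : ∀ i, ∑ l, P i l = 1) (x : ι → H) (i : ι) :
    gossip P (deviation x) i = gossip P x i - avg x := by
  simp only [gossip, deviation, smul_sub, sum_sub_distrib, ← sum_smul, hrow, one_smul]

theorem sum_gossip (hcol : ∀ l, ∑ i, P i l = 1) (x : ι → H) : ∑ i, gossip P x i = ∑ l, x l := by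
  simp only [gossip]
  rw [sum_comm]
  simp only [← sum_smul, hcol, one_smul]

theorem avg_gossip (hcol : ∀ l, ∑ i, P i l = 1) (x : ι → H) : avg (gossip P x) = avg x := by
  rw [avg, sum_gossip hcol, avg]

theorem avg_gossip_sub_smul (hcol : ∀ l, ∑ i, P i l = 1) (c : ℝ) (x y : ι → H) :
    avg (gossip P x - c • y) = avg x - c • avg y := by
  rw [avg_sub, avg_gossip hcol, avg_smul]

theorem deviation_gossip_sub_smul (hrow : ∀ i, ∑ l, P i l = 1) (hcol : ∀ l, ∑ i, P i l = 1)
    (c : ℝ) (x y : ι → H) :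
    deviation (gossip P x - c • y) = gossip P (deviation x) - c • deviation y := by
  ext i
  simp only [deviation, avg_gossip_sub_smul hcol, Pi.sub_apply, Pi.smul_apply,
    gossip_deviation hrow, smul_sub]
  abel

theorem l2norm_deviation_gossip_sub_smul_le [Nonempty ι] (hrow : ∀ i, ∑ l, P i l = 1)
    (hcol : ∀ l, ∑ i, P i l = 1) {lam : ℝ}
    (hspec : ∀ u : ι → H, ∑ i, u i = 0 → l2norm (gossip P u) ≤ lam * l2norm u)
    (c : ℝ) (x y : ι → H) :
    l2norm (deviation (gossip P x - c • y)) ≤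
      lam * l2norm (deviation x) + |c| * l2norm (deviation y) := by
  rw [deviation_gossip_sub_smul hrow hcol, ← l2norm_smul]
  exact (l2norm_sub_le _ _).trans (add_le_add_left (hspec _ (sum_deviation x)) _)

theorem norm_avg_gossip_sub_smul_le [Nonempty ι] (hcol : ∀ l, ∑ i, P i l = 1)
    {c β a K : ℝ} (hc : 0 ≤ c) (hβ : 0 ≤ β) {x y : ι → H}
    (hy : ∑ i, ‖y i‖ ≤ β * ∑ i, ‖x i‖ + a) (hx : l2norm (deviation x) ≤ √(Fintype.card ι) * K) :
    ‖avg (gossip P x - c • y)‖ ≤ (1 + β * c) * ‖avg x‖ + c * (β * K + a / Fintype.card ι) := by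
  set m : ℝ := (Fintype.card ι : ℝ)
  have hm : 0 < m := Nat.cast_pos.mpr Fintype.card_pos
  have hsum_x : ∑ i, ‖x i‖ ≤ m * ‖avg x‖ + m * K := by
    calc ∑ i, ‖x i‖ ≤ m * ‖avg x‖ + √m * (√m * K) := by
          grw [sum_norm_le_card_mul_norm_avg_add, hx]
      _ = _ := by rw [← mul_assoc, Real.mul_self_sqrt hm.le]
  have hy_avg : ‖avg y‖ ≤ β * ‖avg x‖ + (β * K + a / m) := by
    calc ‖avg y‖ ≤ m⁻¹ * (β * (m * ‖avg x‖ + m * K) + a) := by grw [norm_avg_le, hy, hsum_x]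
      _ = _ := by field_simp; ring
  calc ‖avg (gossip P x - c • y)‖ ≤ ‖avg x‖ + c * ‖avg y‖ := by
        rw [avg_gossip_sub_smul hcol]
        simpa [norm_smul, abs_of_nonneg hc] using norm_sub_le (avg x) (c • avg y)
    _ ≤ ‖avg x‖ + c * (β * ‖avg x‖ + (β * K + a / m)) := by gcongr
    _ = _ := by ring

end Gossip

section Dynamics

variable [Nonempty ι] {P : ι → ι → ℝ} {lam G : ℝ} {η : ℕ → ℝ} {δ g : ℕ → ι → H} {T : ℕ}

theorem l2norm_deviation_le (hrow : ∀ i, ∑ l, P i l = 1) (hcol : ∀ l, ∑ i, P i l = 1)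
    (hspec : ∀ u : ι → H, ∑ i, u i = 0 → l2norm (gossip P u) ≤ lam * l2norm u)
    (hlam : 0 ≤ lam) (hη : ∀ t ∈ Icc 1 T, 0 ≤ η t) (hg : ∀ t i, ‖g t i‖ ≤ G) (hδ₁ : δ 1 = 0)
    (hδ : ∀ t ∈ Icc 1 T, δ (t + 1) = gossip P (δ t) - η t • g t) {t : ℕ} (ht : t ∈ Icc 1 (T + 1)) :
    l2norm (deviation (δ t)) ≤
      √(Fintype.card ι) * (2 * G * ∑ q ∈ Icc 1 (t - 1), η q * lam ^ (t - q - 1)) := by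
  obtain ⟨t, rfl⟩ : ∃ t', t = t' + 1 := ⟨t - 1, by grind⟩
  have hG : 0 ≤ G := (norm_nonneg _).trans (hg 0 (Classical.arbitrary ι))
  have hsub : Icc 1 t ⊆ Icc 1 T := Icc_subset_Icc_right (by grind)
  have hstep : ∀ s ∈ Icc 1 t, l2norm (deviation (δ (s + 1))) ≤
      lam * l2norm (deviation (δ s)) + η s * (√(Fintype.card ι) * (2 * G)) := by
    intro s hs
    rw [hδ s (hsub hs)]
    grw [l2norm_deviation_gossip_sub_smul_le hrow hcol hspec,
      l2norm_le_sqrt_card_mul (by positivity) (norm_deviation_le hG (hg s)),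
      abs_of_nonneg (hη s (hsub hs))]
  refine (discrete_gronwall_prod_Icc (u := fun s => l2norm (deviation (δ s)))
    (by simp [hδ₁, deviation, avg, l2norm]) (fun _ _ => hlam) hstep).trans_eq ?_
  simp only [prod_const, Nat.card_Icc, Nat.add_sub_add_right, Nat.add_sub_cancel, mul_sum]
  refine sum_congr rfl fun q _ => ?_
  rw [show t + 1 - q - 1 = t - q by omega]
  ring

theorem norm_avg_le_sum_mul_prod (hrow : ∀ i, ∑ l, P i l = 1) (hcol : ∀ l, ∑ i, P i l = 1)
    (hspec : ∀ u : ι → H, ∑ i, u i = 0 → l2norm (gossip P u) ≤ lam * l2norm u)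
    (hlam : 0 ≤ lam) (hη : ∀ t ∈ Icc 1 T, 0 ≤ η t) (hg : ∀ t i, ‖g t i‖ ≤ G) (hδ₁ : δ 1 = 0)
    (hδ : ∀ t ∈ Icc 1 T, δ (t + 1) = gossip P (δ t) - η t • g t) {β : ℝ} (hβ : 0 ≤ β)
    {a : ℕ → ℝ} (hga : ∀ t ∈ Icc 1 T, ∑ i, ‖g t i‖ ≤ β * ∑ i, ‖δ t i‖ + a t) :
    ‖avg (δ (T + 1))‖ ≤ ∑ t ∈ Icc 1 T,
      η t * (β * (2 * G * ∑ q ∈ Icc 1 (t - 1), η q * lam ^ (t - q - 1)) + a t / Fintype.card ι) *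
        ∏ s ∈ Icc (t + 1) T, (1 + β * η s) := by
  refine discrete_gronwall_prod_Icc (u := fun t => ‖avg (δ t)‖) (by simp [hδ₁, avg])
    (fun t ht => by have := hη t ht; positivity) fun t ht => ?_
  rw [hδ t ht]
  exact norm_avg_gossip_sub_smul_le hcol (hη t ht) hβ (hga t ht)
    (l2norm_deviation_le hrow hcol hspec hlam hη hg hδ₁ hδ (Icc_subset_Icc_right T.le_succ ht))

end Dynamics

end DSGD

end

open DSGD in
theorem dsgd_stability_nonconvex_general
    {H : Type*} [NormedAddCommGroup H] [InnerProductSpace ℝ H]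
    {Z : Type*} (f : Z → H → ℝ) (f' : Z → H → H)
    (L β : ℝ) (hL : 0 < L) (hβ : 0 < β)
    (hlip : ∀ (z : Z) (x y : H), |f z x - f z y| ≤ L * ‖x - y‖)
    (hgradbd : ∀ (z : Z) (x : H), ‖f' z x‖ ≤ L)
    (hsmooth : ∀ (z : Z) (x y : H), ‖f' z x - f' z y‖ ≤ β * ‖x - y‖)
    (m n T : ℕ) (hm : 1 ≤ m)
    (P : Fin m → Fin m → ℝ)
    (hPsym : ∀ i l, P i l = P l i)
    (hProw : ∀ i, ∑ l, P i l = 1)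
    (lam : ℝ) (hlam0 : 0 ≤ lam)
    (hspec : ∀ vv : Fin m → H, ∑ i, vv i = 0 →
      Real.sqrt (∑ i, ‖∑ l, P i l • vv l‖ ^ 2) ≤ lam * Real.sqrt (∑ i, ‖vv i‖ ^ 2))
    (r : Fin m) (k : Fin n)
    (S S' : Fin m → Fin n → Z)
    (hSS' : ∀ (r' : Fin m) (k' : Fin n), (r', k') ≠ (r, k) → S' r' k' = S r' k')
    (j : ℕ → Fin m → Fin n)
    (η : ℕ → ℝ) (hηpos : ∀ t, 1 ≤ t → t ≤ T → 0 < η t)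
    (w₀ : H) (w v : ℕ → Fin m → H)
    (hw1 : ∀ i, w 1 i = w₀) (hv1 : ∀ i, v 1 i = w₀)
    (hwrec : ∀ t, 1 ≤ t → t ≤ T → ∀ i,
      w (t + 1) i = ∑ l, P i l • w t l - η t • f' (S i (j t i)) (w t i))
    (hvrec : ∀ t, 1 ≤ t → t ≤ T → ∀ i,
      v (t + 1) i = ∑ l, P i l • v t l - η t • f' (S' i (j t i)) (v t i))
    :
    ∀ z : Z,
      |f z ((m : ℝ)⁻¹ • ∑ i, w (T + 1) i) - f z ((m : ℝ)⁻¹ • ∑ i, v (T + 1) i)| ≤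
        2 * L ^ 2 * ∑ t ∈ Finset.Icc 1 T,
          (2 * β * η t * (∑ q ∈ Finset.Icc 1 (t - 1), η q * lam ^ (t - q - 1))
              + η t / m * (if j t r = k then (1 : ℝ) else 0)) *
            ∏ s ∈ Finset.Icc (t + 1) T, (1 + β * η s) := by
  intro z
  have : Nonempty (Fin m) := ⟨⟨0, hm⟩⟩
  have hcol : ∀ l, ∑ i, P i l = 1 := fun l => by simpa only [hPsym _ l] using hProw l
  have hη : ∀ t ∈ Icc 1 T, 0 ≤ η t := fun t ht => (hηpos t (mem_Icc.1 ht).1 (mem_Icc.1 ht).2).le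
  set δ : ℕ → Fin m → H := fun t => w t - v t
  set g : ℕ → Fin m → H := fun t i => f' (S i (j t i)) (w t i) - f' (S' i (j t i)) (v t i)
  have hδ₁ : δ 1 = 0 := funext fun i => by simp [δ, hw1, hv1]
  have hδ : ∀ t ∈ Icc 1 T, δ (t + 1) = gossip P (δ t) - η t • g t := fun t ht => funext fun i => by
    simp only [δ, g, Pi.sub_apply, Pi.smul_apply, gossip, hwrec t (mem_Icc.1 ht).1 (mem_Icc.1 ht).2,
      hvrec t (mem_Icc.1 ht).1 (mem_Icc.1 ht).2, smul_sub, sum_sub_distrib]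
    abel
  have hg : ∀ t i, ‖g t i‖ ≤ 2 * L := fun t i =>
    (norm_sub_le _ _).trans <| (add_le_add (hgradbd _ _) (hgradbd _ _)).trans_eq (two_mul L).symm
  have hstab := norm_avg_le_sum_mul_prod hProw hcol hspec hlam0 hη hg hδ₁ hδ hβ.le
    fun t _ => sum_norm_grad_sub_le hβ.le hgradbd hsmooth hSS' (j t) (w t) (v t)
  have hmean : avg (δ (T + 1)) = (m : ℝ)⁻¹ • ∑ i, w (T + 1) i - (m : ℝ)⁻¹ • ∑ i, v (T + 1) i := by
    simp only [δ, avg, Fintype.card_fin, Pi.sub_apply, sum_sub_distrib, smul_sub]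
  calc _ ≤ L * ‖avg (δ (T + 1))‖ := hmean ▸ hlip z _ _
    _ ≤ _ := by grw [hstab]
    _ = _ := by
      rw [mul_sum, mul_sum]
      refine sum_congr rfl fun t _ => ?_
      simp only [Fintype.card_fin]
      ring

/-- non-convex case, general stepsizes. -/
theorem dsgd_stability_nonconvex
    {H : Type*} [NormedAddCommGroup H] [InnerProductSpace ℝ H]
    {Z : Type*} (f : Z → H → ℝ) (f' : Z → H → H)
    (L β : ℝ) (hL : 0 < L) (hβ : 0 < β)
    (hdiff : ∀ (z : Z) (x : H), HasFDerivAt (f z) ((innerSL ℝ) (f' z x)) x)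
    (hlip : ∀ (z : Z) (x y : H), |f z x - f z y| ≤ L * ‖x - y‖)
    (hgradbd : ∀ (z : Z) (x : H), ‖f' z x‖ ≤ L)
    (hsmooth : ∀ (z : Z) (x y : H), ‖f' z x - f' z y‖ ≤ β * ‖x - y‖)
    (m n T : ℕ) (hm : 1 ≤ m) (hn : 1 ≤ n) (hT : 1 ≤ T)
    (P : Fin m → Fin m → ℝ)
    (hPsym : ∀ i l, P i l = P l i)
    (hPpos : ∀ i l, 0 ≤ P i l)
    (hProw : ∀ i, ∑ l, P i l = 1)
    (lam : ℝ) (hlam0 : 0 ≤ lam) (hlam1 : lam < 1)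
    (hspec : ∀ vv : Fin m → H, ∑ i, vv i = 0 →
      Real.sqrt (∑ i, ‖∑ l, P i l • vv l‖ ^ 2) ≤ lam * Real.sqrt (∑ i, ‖vv i‖ ^ 2))
    (r : Fin m) (k : Fin n)
    (S S' : Fin m → Fin n → Z)
    (hSS' : ∀ (r' : Fin m) (k' : Fin n), (r', k') ≠ (r, k) → S' r' k' = S r' k')
    (j : ℕ → Fin m → Fin n)
    (η : ℕ → ℝ) (hηpos : ∀ t, 1 ≤ t → t ≤ T → 0 < η t)
    (w₀ : H) (w v : ℕ → Fin m → H)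
    (hw1 : ∀ i, w 1 i = w₀) (hv1 : ∀ i, v 1 i = w₀)
    (hwrec : ∀ t, 1 ≤ t → t ≤ T → ∀ i,
      w (t + 1) i = ∑ l, P i l • w t l - η t • f' (S i (j t i)) (w t i))
    (hvrec : ∀ t, 1 ≤ t → t ≤ T → ∀ i,
      v (t + 1) i = ∑ l, P i l • v t l - η t • f' (S' i (j t i)) (v t i))
    :
    ∀ z : Z,
      |f z ((m : ℝ)⁻¹ • ∑ i, w (T + 1) i) - f z ((m : ℝ)⁻¹ • ∑ i, v (T + 1) i)| ≤
        2 * L ^ 2 * ∑ t ∈ Finset.Icc 1 T,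
          (2 * β * η t * (∑ q ∈ Finset.Icc 1 (t - 1), η q * lam ^ (t - q - 1))
              + η t / m * (if j t r = k then (1 : ℝ) else 0)) *
            ∏ s ∈ Finset.Icc (t + 1) T, (1 + β * η s) :=
  dsgd_stability_nonconvex_general f f' L β hL hβ hlip hgradbd hsmooth m n T hm P hPsym hProw lam
    hlam0 hspec r k S S' hSS' j η hηpos w₀ w v hw1 hv1 hwrec hvrec
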